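/- Let b : ℝ³ \ {0} → ℝ be smooth and (-1)-homogeneous, and let u_r : ℝ³ \ {0} → ℝ be continuous and (-1)-homogeneous. Suppose that for all 0 < ρ₁ < ρ₂, ∫_{B_{ρ₂} \ B_{ρ₁}} [ r |∇b|² + b² (1/(2r) - (3/2) u_r) ] dx = 0, where r(x) = √(x₁²+x₂²), and that u_r(x) < 1/(3 r(x)) + 2 r(x)/3 for all x on the unit sphere with r(x) > 0. Then b ≡ 0 on ℝ³ \ {0}. -/

import Mathlib

noncomputable section

open Real MeasureTheory Metric Set

lemma aux_int_plane {R : ℝ} (hR : 0 < R) :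
    IntegrableOn (fun p : ℝ × ℝ => (Real.sqrt (p.1 ^ 2 + p.2 ^ 2))⁻¹)
      {p : ℝ × ℝ | p.1 ^ 2 + p.2 ^ 2 < R ^ 2} volume := by
  set g : ℝ × ℝ → ℝ := fun p => (Real.sqrt (p.1 ^ 2 + p.2 ^ 2))⁻¹ with hg
  set s : Set (ℝ × ℝ) := Ioo (0:ℝ) R ×ˢ Ioo (-π) π with hs
  set B : ℝ × ℝ → ℝ × ℝ →L[ℝ] ℝ × ℝ := fun p =>
    LinearMap.toContinuousLinearMap (Matrix.toLin (Module.Basis.finTwoProd ℝ) (Module.Basis.finTwoProd ℝ)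
      !![cos p.2, -p.1 * sin p.2; sin p.2, p.1 * cos p.2]) with hB
  have B_det : ∀ p, (B p).det = p.1 := by
    intro p
    conv_rhs => rw [← one_mul p.1, ← cos_sq_add_sin_sq p.2]
    simp only [B, neg_mul, LinearMap.det_toContinuousLinearMap, LinearMap.det_toLin,
      Matrix.det_fin_two_of, sub_neg_eq_add]
    ring
  have hmeas : MeasurableSet s := measurableSet_Ioo.prod measurableSet_Ioo
  have hderiv : ∀ p ∈ s, HasFDerivWithinAt polarCoord.symm (B p) s p := fun p _ =>
    (hasFDerivAt_polarCoord_symm p).hasFDerivWithinAt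
  have hinj : InjOn polarCoord.symm s := by
    have : s ⊆ polarCoord.symm.source := by
      rw [OpenPartialHomeomorph.symm_source]
      rintro ⟨r, θ⟩ ⟨h1, h2⟩
      exact ⟨Set.mem_Ioi.2 h1.1, h2⟩
    exact polarCoord.symm.injOn.mono this
  have key := (integrableOn_image_iff_integrableOn_abs_det_fderiv_smul volume hmeas hderiv hinj g)
  have hint : IntegrableOn (fun p => |(B p).det| • g (polarCoord.symm p)) s volume := by
    have heq : ∀ p ∈ s, |(B p).det| • g (polarCoord.symm p) = 1 := by
      rintro ⟨r, θ⟩ ⟨h1, _⟩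
      have hr : (0:ℝ) < r := h1.1
      simp only [B_det, g, smul_eq_mul]
      have : polarCoord.symm (r, θ) = (r * cos θ, r * sin θ) := rfl
      rw [this]
      have : (r * cos θ) ^ 2 + (r * sin θ) ^ 2 = r ^ 2 := by
        have := sin_sq_add_cos_sq θ; nlinarith
      rw [this, Real.sqrt_sq hr.le, abs_of_pos hr, mul_inv_cancel₀ hr.ne']
    have : IntegrableOn (fun _ : ℝ × ℝ => (1:ℝ)) s volume := by
      refine integrableOn_const (ne_of_lt ?_)
      rw [hs]
      exact lt_of_le_of_lt (measure_mono (Set.prod_mono Set.Ioo_subset_Icc_self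
        Set.Ioo_subset_Icc_self)) (by
          rw [Measure.volume_eq_prod, Measure.prod_prod]
          exact ENNReal.mul_lt_top (by simp) (by simp))
    exact this.congr_fun (fun p hp => (heq p hp).symm) hmeas
  have himg : IntegrableOn g (polarCoord.symm '' s) volume := key.2 hint
  -- identify the image
  have himg_eq : polarCoord.symm '' s
      = polarCoord.source ∩ {x : ℝ × ℝ | Real.sqrt (x.1 ^ 2 + x.2 ^ 2) < R} := by
    have hs' : s = polarCoord.target ∩ {p : ℝ × ℝ | p.1 < R} := by
      rw [hs]
      ext ⟨r, θ⟩
      simp only [polarCoord_target, Set.mem_prod, Set.mem_Ioo, Set.mem_Ioi, Set.mem_inter_iff,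
        Set.mem_setOf_eq]
      tauto
    have himg0 : polarCoord.symm '' s
        = polarCoord.source ∩ ↑polarCoord ⁻¹' (polarCoord.target ∩ {p : ℝ × ℝ | p.1 < R}) := by
      rw [hs']; exact polarCoord.symm_image_target_inter_eq _
    rw [himg0]
    ext x
    simp only [Set.mem_inter_iff, Set.mem_preimage, Set.mem_setOf_eq]
    constructor
    · rintro ⟨hx, -, h2⟩; exact ⟨hx, h2⟩
    · rintro ⟨hx, h2⟩; exact ⟨hx, polarCoord.map_source hx, h2⟩
  have hae : {p : ℝ × ℝ | p.1 ^ 2 + p.2 ^ 2 < R ^ 2} =ᵐ[volume] polarCoord.symm '' s := by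
    rw [himg_eq]
    have h1 : {p : ℝ × ℝ | p.1 ^ 2 + p.2 ^ 2 < R ^ 2}
        = {x : ℝ × ℝ | Real.sqrt (x.1 ^ 2 + x.2 ^ 2) < R} := by
      ext p
      simp only [Set.mem_setOf_eq]
      rw [show (R:ℝ) = Real.sqrt (R ^ 2) by rw [Real.sqrt_sq hR.le]]
      rw [Real.sqrt_lt_sqrt_iff (by positivity)]
      rw [Real.sqrt_sq hR.le]
    rw [h1]
    have h2 : (polarCoord.source ∩ {x : ℝ × ℝ | Real.sqrt (x.1 ^ 2 + x.2 ^ 2) < R} : Set (ℝ × ℝ))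
        =ᵐ[volume] ((Set.univ : Set (ℝ × ℝ)) ∩ {x : ℝ × ℝ | Real.sqrt (x.1 ^ 2 + x.2 ^ 2) < R} : Set (ℝ × ℝ)) :=
      MeasureTheory.ae_eq_set_inter polarCoord_source_ae_eq_univ (Filter.EventuallyEq.refl _ _)
    rw [Set.univ_inter] at h2
    exact h2.symm
  rw [IntegrableOn, Measure.restrict_congr_set hae]
  exact himg

lemma norm_sq_eq3 (x : EuclideanSpace ℝ (Fin 3)) :
    ‖x‖ ^ 2 = (x 0) ^ 2 + (x 1) ^ 2 + (x 2) ^ 2 := by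
  rw [EuclideanSpace.norm_eq]
  rw [Real.sq_sqrt (by positivity)]
  simp [Fin.sum_univ_three, sq_abs]

lemma aux_int_r3 {R : ℝ} (hR : 0 < R) :
    IntegrableOn (fun x : EuclideanSpace ℝ (Fin 3) => (Real.sqrt ((x 0) ^ 2 + (x 1) ^ 2))⁻¹)
      (closedBall (0 : EuclideanSpace ℝ (Fin 3)) R) volume := by
  set D : Set (ℝ × ℝ) := {p : ℝ × ℝ | p.1 ^ 2 + p.2 ^ 2 < (2 * R) ^ 2} with hD
  have hDmeas : MeasurableSet D :=
    (isOpen_lt (by fun_prop) continuous_const).measurableSet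
  set F : ℝ × (ℝ × ℝ) → ℝ := fun q =>
    (Set.indicator (Icc (-R) R) (fun _ => (1:ℝ)) q.1) *
      (Set.indicator D (fun p => (Real.sqrt (p.1 ^ 2 + p.2 ^ 2))⁻¹) q.2) with hF
  have h1 : Integrable (Set.indicator (Icc (-R) R) (fun _ => (1:ℝ))) volume := by
    rw [integrable_indicator_iff measurableSet_Icc]
    exact integrableOn_const (by simp)
  have h2 : Integrable (Set.indicator D (fun p => (Real.sqrt (p.1 ^ 2 + p.2 ^ 2))⁻¹)) volume := by
    rw [integrable_indicator_iff hDmeas]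
    exact aux_int_plane (by positivity)
  have hFint : Integrable F volume := by
    rw [hF, Measure.volume_eq_prod]
    exact h1.mul_prod h2
  -- the measure preserving map
  set Φ : EuclideanSpace ℝ (Fin 3) → ℝ × (ℝ × ℝ) := fun x => (x 2, (x 0, x 1)) with hΦ
  have hΦmp : MeasurePreserving Φ volume volume := by
    have e1 := EuclideanSpace.volume_preserving_symm_measurableEquiv_toLp (Fin 3)
    have e2 := MeasureTheory.volume_preserving_piFinSuccAbove (fun _ : Fin 3 => ℝ) 2
    have e3 := (MeasurePreserving.id (volume : Measure ℝ)).prod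
      (MeasureTheory.volume_preserving_finTwoArrow ℝ)
    have hcomp := (e3.comp e2).comp e1
    have : (Prod.map id (MeasurableEquiv.finTwoArrow : (Fin 2 → ℝ) ≃ᵐ ℝ × ℝ)) ∘
        (MeasurableEquiv.piFinSuccAbove (fun _ : Fin 3 => ℝ) 2) ∘
        ((MeasurableEquiv.toLp 2 (Fin 3 → ℝ)).symm) = Φ := by
      funext x
      show _ = (x 2, (x 0, x 1))
      simp only [Function.comp_apply, MeasurableEquiv.piFinSuccAbove_apply, Prod.map_apply,
        MeasurableEquiv.finTwoArrow_apply, id_eq]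
      refine Prod.ext rfl (Prod.ext ?_ ?_) <;>
      · show ((MeasurableEquiv.toLp 2 (Fin 3 → ℝ)).symm x) _ = _
        norm_num [Fin.succAbove]
        rfl
    rw [← Measure.volume_eq_prod] at hcomp
    rw [Function.comp_assoc] at hcomp
    rwa [this] at hcomp
  have hFΦ : Integrable (F ∘ Φ) volume :=
    (hΦmp.integrable_comp hFint.aestronglyMeasurable).2 hFint
  -- conclude by domination
  have hcont : Continuous fun x : EuclideanSpace ℝ (Fin 3) =>
      Real.sqrt ((x 0) ^ 2 + (x 1) ^ 2) := by fun_prop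
  have hmeasf : Measurable fun x : EuclideanSpace ℝ (Fin 3) =>
      (Real.sqrt ((x 0) ^ 2 + (x 1) ^ 2))⁻¹ := hcont.measurable.inv
  rw [← integrable_indicator_iff measurableSet_closedBall]
  apply hFΦ.mono' ((hmeasf.indicator measurableSet_closedBall).aestronglyMeasurable)
  filter_upwards with x
  by_cases hx : x ∈ closedBall (0 : EuclideanSpace ℝ (Fin 3)) R
  · have hxn : ‖x‖ ≤ R := by simpa [dist_eq_norm] using hx
    have hsq : ‖x‖ ^ 2 ≤ R ^ 2 := by nlinarith [norm_nonneg x]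
    have hnx := norm_sq_eq3 x
    rw [Set.indicator_of_mem hx]
    have hx2 : x 2 ∈ Icc (-R) R := by
      constructor <;> nlinarith
    have hx01 : ((x 0 : ℝ), (x 1 : ℝ)) ∈ D := by
      simp only [hD, Set.mem_setOf_eq]
      nlinarith
    have : F (Φ x) = (Real.sqrt ((x 0) ^ 2 + (x 1) ^ 2))⁻¹ := by
      simp only [hF, hΦ, Function.comp_apply, Set.indicator_of_mem hx2,
        Set.indicator_of_mem hx01, one_mul]
    rw [Function.comp_apply] at *
    rw [this]
    rw [Real.norm_eq_abs, abs_of_nonneg (by positivity)]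
  · rw [Set.indicator_of_notMem hx]
    simp only [norm_zero, Function.comp_apply, hF]
    apply mul_nonneg
    · exact Set.indicator_nonneg (fun _ _ => zero_le_one) _
    · exact Set.indicator_nonneg (fun _ _ => by positivity) _

-- the hyperplane x 0 = 0 is null
lemma axis_null : volume {x : EuclideanSpace ℝ (Fin 3) | x 0 = 0} = 0 := by
  have l := (EuclideanSpace.proj (0 : Fin 3) : EuclideanSpace ℝ (Fin 3) →L[ℝ] ℝ)
  set N : Submodule ℝ (EuclideanSpace ℝ (Fin 3)) :=
    LinearMap.ker ((EuclideanSpace.proj (0 : Fin 3) : EuclideanSpace ℝ (Fin 3) →L[ℝ] ℝ) :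
      EuclideanSpace ℝ (Fin 3) →ₗ[ℝ] ℝ) with hN
  have hne : N ≠ ⊤ := by
    intro h
    have h1 : (EuclideanSpace.single (0 : Fin 3) (1:ℝ)) ∈ N := h ▸ Submodule.mem_top
    simp only [hN, LinearMap.mem_ker] at h1
    simp [PiLp.proj_apply, EuclideanSpace.single_apply] at h1
  have := Measure.addHaar_submodule (volume : Measure (EuclideanSpace ℝ (Fin 3))) N hne
  have hset : {x : EuclideanSpace ℝ (Fin 3) | x 0 = 0} = (N : Set (EuclideanSpace ℝ (Fin 3))) := by
    ext x
    simp only [hN, Set.mem_setOf_eq, SetLike.mem_coe, LinearMap.mem_ker,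
      ContinuousLinearMap.coe_coe, PiLp.proj_apply]
  rw [hset]
  exact this

-- the key derivative estimate from homogeneity
lemma grad_lower (b : EuclideanSpace ℝ (Fin 3) → ℝ)
    (hb : ContDiffOn ℝ (⊤ : ℕ∞) b {x : EuclideanSpace ℝ (Fin 3) | x ≠ 0})
    (hbhom : ∀ lam : ℝ, 0 < lam → ∀ x : EuclideanSpace ℝ (Fin 3), x ≠ 0 →
      b (lam • x) = lam⁻¹ * b x)
    {x : EuclideanSpace ℝ (Fin 3)} (hx : x ≠ 0) :
    |b x| ≤ ‖gradient b x‖ * ‖x‖ := by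
  have hU : IsOpen {y : EuclideanSpace ℝ (Fin 3) | y ≠ 0} := isOpen_ne
  have hdiff : DifferentiableAt ℝ b x :=
    (hb.contDiffAt (hU.mem_nhds hx)).differentiableAt (by simp)
  have hψ : HasDerivAt (fun t : ℝ => t • x) ((1:ℝ) • x) 1 :=
    (hasDerivAt_id (1:ℝ)).smul_const x
  have h1 : HasDerivAt (fun t : ℝ => b (t • x)) (fderiv ℝ b x x) 1 := by
    have hfd : HasFDerivAt b (fderiv ℝ b x) ((1:ℝ) • x) := by
      rw [one_smul]; exact hdiff.hasFDerivAt
    have := hfd.comp_hasDerivAt 1 hψ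
    rw [one_smul] at this
    exact this
  have h2 : HasDerivAt (fun t : ℝ => t⁻¹ * b x) (-b x) 1 := by
    have := (hasDerivAt_inv (one_ne_zero (α := ℝ))).mul_const (b x)
    simpa using this
  have h3 : (fun t : ℝ => b (t • x)) =ᶠ[nhds 1] fun t : ℝ => t⁻¹ * b x := by
    filter_upwards [isOpen_Ioi.mem_nhds (show (0:ℝ) < 1 by norm_num)] with t ht
    exact hbhom t ht x hx
  have h4 : fderiv ℝ b x x = -b x := (h1.congr_of_eventuallyEq h3.symm).unique h2
  have h5 : (inner ℝ (gradient b x) x : ℝ) = fderiv ℝ b x x := by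
    rw [gradient]
    exact InnerProductSpace.toDual_symm_apply
  have h6 : |b x| = |(inner ℝ (gradient b x) x : ℝ)| := by
    rw [h5, h4, abs_neg]
  rw [h6]
  exact abs_real_inner_le_norm _ _

set_option maxHeartbeats 2000000 in
/-- If `b` is smooth and `(-1)`-homogeneous, `u_r` is continuous and
`(-1)`-homogeneous, the integral identity
`∫_{B_{ρ₂}\B_{ρ₁}} [ r|∇b|² + b²(1/(2r) - (3/2)u_r) ] = 0` holds on all annuli, and
`u_r < 1/(3r) + 2r/3` on the unit sphere (where `r > 0`), then `b ≡ 0`. -/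
theorem b_vanishes_from_integral_identity
    (b u_r : EuclideanSpace ℝ (Fin 3) → ℝ)
    (hb : ContDiffOn ℝ (⊤ : ℕ∞) b {x : EuclideanSpace ℝ (Fin 3) | x ≠ 0})
    (hbhom : ∀ lam : ℝ, 0 < lam → ∀ x : EuclideanSpace ℝ (Fin 3), x ≠ 0 →
      b (lam • x) = lam⁻¹ * b x)
    (hucont : ContinuousOn u_r {x : EuclideanSpace ℝ (Fin 3) | x ≠ 0})
    (huhom : ∀ lam : ℝ, 0 < lam → ∀ x : EuclideanSpace ℝ (Fin 3), x ≠ 0 →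
      u_r (lam • x) = lam⁻¹ * u_r x)
    (hid : ∀ ρ₁ ρ₂ : ℝ, 0 < ρ₁ → ρ₁ < ρ₂ →
      ∫ x in ball (0 : EuclideanSpace ℝ (Fin 3)) ρ₂ \ ball (0 : EuclideanSpace ℝ (Fin 3)) ρ₁,
        (Real.sqrt ((x 0) ^ 2 + (x 1) ^ 2) * ‖gradient b x‖ ^ 2
          + (b x) ^ 2 * (1 / (2 * Real.sqrt ((x 0) ^ 2 + (x 1) ^ 2))
              - (3 / 2) * u_r x)) ∂volume = 0)
    (hsmall : ∀ x : EuclideanSpace ℝ (Fin 3), ‖x‖ = 1 →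
      0 < Real.sqrt ((x 0) ^ 2 + (x 1) ^ 2) →
      u_r x < 1 / (3 * Real.sqrt ((x 0) ^ 2 + (x 1) ^ 2))
        + 2 * Real.sqrt ((x 0) ^ 2 + (x 1) ^ 2) / 3) :
    ∀ x : EuclideanSpace ℝ (Fin 3), x ≠ 0 → b x = 0 := by
  -- notation
  set r : EuclideanSpace ℝ (Fin 3) → ℝ := fun x => Real.sqrt ((x 0) ^ 2 + (x 1) ^ 2) with hr_def
  set F : EuclideanSpace ℝ (Fin 3) → ℝ := fun x =>
    r x * ‖gradient b x‖ ^ 2 + (b x) ^ 2 * (1 / (2 * r x) - (3 / 2) * u_r x) with hF_def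
  have hU : IsOpen {y : EuclideanSpace ℝ (Fin 3) | y ≠ 0} := isOpen_ne
  have hrc : Continuous r := by fun_prop
  have hbc : ContinuousOn b {y : EuclideanSpace ℝ (Fin 3) | y ≠ 0} := hb.continuousOn
  have hgc : ContinuousOn (fun x : EuclideanSpace ℝ (Fin 3) => ‖gradient b x‖) {y : EuclideanSpace ℝ (Fin 3) | y ≠ 0} := by
    have h1 : ContinuousOn (fun x : EuclideanSpace ℝ (Fin 3) => fderiv ℝ b x) {y : EuclideanSpace ℝ (Fin 3) | y ≠ 0} :=
      hb.continuousOn_fderiv_of_isOpen hU (by simp)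
    have h2 : ContinuousOn (fun x : EuclideanSpace ℝ (Fin 3) => ‖fderiv ℝ b x‖) {y : EuclideanSpace ℝ (Fin 3) | y ≠ 0} := h1.norm
    refine h2.congr fun x _ => ?_
    rw [gradient, LinearIsometryEquiv.norm_map]
  -- extension of hsmall off the unit sphere
  have hsmall' : ∀ x : EuclideanSpace ℝ (Fin 3), x ≠ 0 → 0 < r x →
      u_r x < 1 / (3 * r x) + 2 * r x / (3 * ‖x‖ ^ 2) := by
    intro x hx hrx
    have hn : (0:ℝ) < ‖x‖ := norm_pos_iff.2 hx
    set n := ‖x‖ with hn_def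
    set y : EuclideanSpace ℝ (Fin 3) := n⁻¹ • x with hy_def
    have hny : ‖y‖ = 1 := by
      rw [hy_def, norm_smul, norm_inv, norm_norm, ← hn_def, inv_mul_cancel₀ hn.ne']
    have hy0 : y 0 = n⁻¹ * x 0 := rfl
    have hy1 : y 1 = n⁻¹ * x 1 := rfl
    have hry : r y = n⁻¹ * r x := by
      rw [hr_def]
      simp only [hy0, hy1]
      rw [show (n⁻¹ * x 0) ^ 2 + (n⁻¹ * x 1) ^ 2 = (n⁻¹) ^ 2 * ((x 0) ^ 2 + (x 1) ^ 2) by ring]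
      rw [Real.sqrt_mul (by positivity), Real.sqrt_sq (by positivity)]
    have hru : u_r y = n * u_r x := by
      rw [hy_def, huhom n⁻¹ (by positivity) x hx, inv_inv]
    have hs := hsmall y hny (by rw [show Real.sqrt ((y 0)^2 + (y 1)^2) = r y from rfl, hry]; positivity)
    rw [show Real.sqrt ((y 0)^2 + (y 1)^2) = r y from rfl, hry, hru] at hs
    have key : n * u_r x < n * (1 / (3 * r x) + 2 * r x / (3 * n ^ 2)) := by
      have hrhs : n * (1 / (3 * r x) + 2 * r x / (3 * n ^ 2))
          = 1 / (3 * (n⁻¹ * r x)) + 2 * (n⁻¹ * r x) / 3 := by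
        field_simp
      rw [hrhs]
      exact hs
    exact lt_of_mul_lt_mul_left key hn.le
  -- pointwise lower bound for F
  have hFbound : ∀ x : EuclideanSpace ℝ (Fin 3), x ≠ 0 → 0 < r x →
      (0 ≤ F x ∧ (b x ≠ 0 → 0 < F x)) := by
    intro x hx hrx
    have hn : (0:ℝ) < ‖x‖ := norm_pos_iff.2 hx
    have hgl := grad_lower b hb hbhom hx
    have hg2 : (b x) ^ 2 / ‖x‖ ^ 2 ≤ ‖gradient b x‖ ^ 2 := by
      rw [div_le_iff₀ (by positivity)]
      calc (b x) ^ 2 = |b x| ^ 2 := (sq_abs _).symm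
        _ ≤ (‖gradient b x‖ * ‖x‖) ^ 2 := by
            apply sq_le_sq' <;> nlinarith [abs_nonneg (b x)]
        _ = ‖gradient b x‖ ^ 2 * ‖x‖ ^ 2 := by ring
    have hu := hsmall' x hx hrx
    have hw : 0 < r x / ‖x‖ ^ 2 + (1 / (2 * r x) - (3 / 2) * u_r x) := by
      have h32 : (3/2 : ℝ) * u_r x < (3/2) * (1 / (3 * r x) + 2 * r x / (3 * ‖x‖ ^ 2)) := by
        apply mul_lt_mul_of_pos_left hu (by norm_num)
      have heq : (3/2 : ℝ) * (1 / (3 * r x) + 2 * r x / (3 * ‖x‖ ^ 2))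
          = 1 / (2 * r x) + r x / ‖x‖ ^ 2 := by
        field_simp
      rw [heq] at h32
      linarith
    have hFge : (b x) ^ 2 * (r x / ‖x‖ ^ 2 + (1 / (2 * r x) - (3 / 2) * u_r x)) ≤ F x := by
      rw [hF_def]
      simp only
      rw [mul_add]
      have : (b x) ^ 2 * (r x / ‖x‖ ^ 2) ≤ r x * ‖gradient b x‖ ^ 2 := by
        rw [show (b x) ^ 2 * (r x / ‖x‖ ^ 2) = r x * ((b x) ^ 2 / ‖x‖ ^ 2) by ring]
        exact mul_le_mul_of_nonneg_left hg2 hrx.le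
      linarith
    constructor
    · refine le_trans ?_ hFge
      positivity
    · intro hbx
      refine lt_of_lt_of_le ?_ hFge
      have : 0 < (b x) ^ 2 := by positivity
      positivity
  -- main argument
  intro x₀ hx₀
  by_contra hb0
  -- find a point off the axis where b is nonzero
  have hV : IsOpen {y : EuclideanSpace ℝ (Fin 3) | y ≠ 0 ∧ b y ≠ 0} := by
    have : {y : EuclideanSpace ℝ (Fin 3) | y ≠ 0 ∧ b y ≠ 0} = {y : EuclideanSpace ℝ (Fin 3) | y ≠ 0} ∩ b ⁻¹' ({0}ᶜ) := by
      ext y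
      simp only [Set.mem_setOf_eq, Set.mem_inter_iff, Set.mem_preimage, Set.mem_compl_iff,
        Set.mem_singleton_iff]
    rw [this]
    exact hbc.isOpen_inter_preimage hU isOpen_compl_singleton
  obtain ⟨δ, hδ, hball⟩ := Metric.isOpen_iff.1 hV x₀ ⟨hx₀, hb0⟩
  obtain ⟨x₁, hx₁ne, hx₁b, hx₁r⟩ :
      ∃ x₁ : EuclideanSpace ℝ (Fin 3), x₁ ≠ 0 ∧ b x₁ ≠ 0 ∧ 0 < r x₁ := by
    by_cases hcase : 0 < r x₀
    · exact ⟨x₀, hx₀, hb0, hcase⟩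
    · have hrx0 : r x₀ = 0 := le_antisymm (not_lt.1 hcase) (Real.sqrt_nonneg _)
      have hsum : (x₀ 0) ^ 2 + (x₀ 1) ^ 2 = 0 := by
        by_contra hne
        have : 0 < (x₀ 0) ^ 2 + (x₀ 1) ^ 2 :=
          lt_of_le_of_ne (by positivity) (Ne.symm hne)
        have := Real.sqrt_pos.2 this
        rw [hr_def] at hrx0
        simp only at hrx0
        linarith
      have h00 : x₀ 0 = 0 := by nlinarith [sq_nonneg (x₀ 0), sq_nonneg (x₀ 1)]
      have h01 : x₀ 1 = 0 := by nlinarith [sq_nonneg (x₀ 0), sq_nonneg (x₀ 1)]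
      set x₁ : EuclideanSpace ℝ (Fin 3) := x₀ + (δ/2) • EuclideanSpace.single (0 : Fin 3) (1:ℝ) with hx₁def
      have hdist : dist x₁ x₀ = δ/2 := by
        rw [dist_eq_norm, hx₁def]
        simp only [add_sub_cancel_left]
        rw [norm_smul, EuclideanSpace.norm_single, norm_one, mul_one, Real.norm_eq_abs,
          abs_of_pos (by linarith : (0:ℝ) < δ/2)]
      have hx₁mem : x₁ ∈ ball x₀ δ := by
        rw [mem_ball, hdist]; linarith
      have hx₁V := hball hx₁mem
      have hx₁0 : x₁ 0 = δ/2 := by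
        rw [hx₁def]
        show x₀ 0 + (δ/2) • (EuclideanSpace.single (0 : Fin 3) (1:ℝ)) 0 = δ/2
        rw [h00, EuclideanSpace.single_apply]
        simp
      have hx₁1 : x₁ 1 = 0 := by
        rw [hx₁def]
        show x₀ 1 + (δ/2) • (EuclideanSpace.single (0 : Fin 3) (1:ℝ)) 1 = 0
        rw [h01, EuclideanSpace.single_apply]
        simp
      refine ⟨x₁, hx₁V.1, hx₁V.2, ?_⟩
      rw [hr_def]
      simp only [hx₁0, hx₁1]
      rw [show (δ/2)^2 + (0:ℝ)^2 = (δ/2)^2 by ring, Real.sqrt_sq (by linarith)]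
      linarith
  clear hball hδ hx₀ hb0
  -- set up the annulus
  set n := ‖x₁‖ with hn_def
  have hn : 0 < n := norm_pos_iff.2 hx₁ne
  set ρ₁ := n/2 with hρ₁def
  set ρ₂ := 2*n with hρ₂def
  have hρ₁ : 0 < ρ₁ := by positivity
  have hρ₁₂ : ρ₁ < ρ₂ := by rw [hρ₁def, hρ₂def]; linarith
  set A : Set (EuclideanSpace ℝ (Fin 3)) := ball (0 : EuclideanSpace ℝ (Fin 3)) ρ₂ \ ball (0 : EuclideanSpace ℝ (Fin 3)) ρ₁ with hAdef
  have hAmeas : MeasurableSet A := measurableSet_ball.diff measurableSet_ball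
  have hAne : ∀ x ∈ A, x ≠ 0 := by
    rintro x ⟨-, hx2⟩ rfl
    exact hx2 (mem_ball_self hρ₁)
  have hAU : A ⊆ {y : EuclideanSpace ℝ (Fin 3) | y ≠ 0} := fun x hx => hAne x hx
  set K : Set (EuclideanSpace ℝ (Fin 3)) := closedBall (0 : EuclideanSpace ℝ (Fin 3)) ρ₂ \ ball (0 : EuclideanSpace ℝ (Fin 3)) ρ₁ with hKdef
  have hAK : A ⊆ K := Set.diff_subset_diff_left ball_subset_closedBall
  have hK : IsCompact K := (isCompact_closedBall (0 : EuclideanSpace ℝ (Fin 3)) ρ₂).diff isOpen_ball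
  have hKU : K ⊆ {y : EuclideanSpace ℝ (Fin 3) | y ≠ 0} := by
    rintro x ⟨-, hx2⟩ rfl
    exact hx2 (mem_ball_self hρ₁)
  have hKmeas : MeasurableSet K := measurableSet_closedBall.diff measurableSet_ball
  -- integrability of F on A
  have hp₁ : IntegrableOn (fun x : EuclideanSpace ℝ (Fin 3) => r x * ‖gradient b x‖ ^ 2) A volume := by
    apply IntegrableOn.mono_set _ hAK
    apply ContinuousOn.integrableOn_compact hK
    exact (hrc.continuousOn).mul ((hgc.mono hKU).pow 2)
  have hp₂ : IntegrableOn (fun x : EuclideanSpace ℝ (Fin 3) => (b x) ^ 2 * ((3/2) * u_r x)) A volume := by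
    apply IntegrableOn.mono_set _ hAK
    apply ContinuousOn.integrableOn_compact hK
    exact ((hbc.mono hKU).pow 2).mul (continuousOn_const.mul (hucont.mono hKU))
  have hp₃ : IntegrableOn (fun x : EuclideanSpace ℝ (Fin 3) => (b x) ^ 2 * (1 / (2 * r x))) A volume := by
    obtain ⟨C, hC⟩ := hK.exists_bound_of_continuousOn (hbc.mono hKU)
    have hx₁K : x₁ ∈ K := by
      refine ⟨mem_closedBall.2 ?_, fun hmem => ?_⟩
      · rw [dist_zero_right, ← hn_def, hρ₂def]; linarith
      · rw [mem_ball, dist_zero_right, ← hn_def, hρ₁def] at hmem; linarith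
    have hC0 : 0 ≤ C := le_trans (norm_nonneg _) (hC _ hx₁K)
    have hdom : IntegrableOn (fun x : EuclideanSpace ℝ (Fin 3) => C^2 * 2⁻¹ * (r x)⁻¹) A volume := by
      have h1 : IntegrableOn (fun x : EuclideanSpace ℝ (Fin 3) => (r x)⁻¹) A volume := by
        apply IntegrableOn.mono_set _ (Set.diff_subset.trans ball_subset_closedBall)
        exact aux_int_r3 (by positivity)
      exact h1.const_mul _
    apply Integrable.mono' hdom
    · apply AEStronglyMeasurable.mul
      · exact (((hbc.mono hAU).pow 2).aestronglyMeasurable hAmeas)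
      · have : Measurable fun x : EuclideanSpace ℝ (Fin 3) => 1 / (2 * r x) := by
          simp only [one_div]
          exact ((continuous_const.mul hrc).measurable).inv
        exact this.aestronglyMeasurable
    · rw [ae_restrict_iff' hAmeas]
      filter_upwards with x hx
      have hbx : ‖b x‖ ≤ C := hC x (hAK hx)
      have hb2 : (b x)^2 ≤ C^2 := by
        rw [← sq_abs (b x)]
        apply sq_le_sq' <;> [linarith [abs_nonneg (b x), (Real.norm_eq_abs (b x)) ▸ hbx];
          exact (Real.norm_eq_abs (b x)) ▸ hbx]
      have hrpos : 0 ≤ (r x)⁻¹ := by positivity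
      rw [Real.norm_eq_abs, abs_of_nonneg (by positivity)]
      rw [show (1:ℝ) / (2 * r x) = 2⁻¹ * (r x)⁻¹ by rw [one_div, mul_inv]]
      calc (b x)^2 * (2⁻¹ * (r x)⁻¹) ≤ C^2 * (2⁻¹ * (r x)⁻¹) := by
            apply mul_le_mul_of_nonneg_right hb2 (by positivity)
        _ = C^2 * 2⁻¹ * (r x)⁻¹ := by ring
  have hFint : IntegrableOn F A volume := by
    have heq : F = fun x : EuclideanSpace ℝ (Fin 3) => (r x * ‖gradient b x‖ ^ 2 + (b x) ^ 2 * (1 / (2 * r x)))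
        - (b x) ^ 2 * ((3/2) * u_r x) := by
      funext x
      rw [hF_def]
      ring
    rw [heq]
    exact (hp₁.add hp₃).sub hp₂
  -- F is a.e. nonneg on A
  have haxis : ∀ᵐ x : EuclideanSpace ℝ (Fin 3) ∂volume, x 0 ≠ 0 := by
    rw [ae_iff]
    simpa using axis_null
  have hFnonneg : 0 ≤ᵐ[volume.restrict A] F := by
    rw [Filter.EventuallyLE, ae_restrict_iff' hAmeas]
    filter_upwards [haxis] with x hx0 hxA
    have hrx : 0 < r x := by
      have h2 : 0 < (x 0)^2 := by positivity
      have h3 : (0:ℝ) ≤ (x 1)^2 := sq_nonneg _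
      have h1 : 0 < (x 0)^2 + (x 1)^2 := by linarith
      exact Real.sqrt_pos.2 h1
    exact (hFbound x (hAne x hxA) hrx).1
  -- the integral identity forces F = 0 a.e. on A
  have hzero : F =ᵐ[volume.restrict A] 0 := by
    rw [← integral_eq_zero_iff_of_nonneg_ae hFnonneg hFint]
    exact hid ρ₁ ρ₂ hρ₁ hρ₁₂
  -- but F is positive on an open neighborhood of x₁ inside A
  have hU' : IsOpen {y : EuclideanSpace ℝ (Fin 3) | y ≠ 0 ∧ 0 < r y} := by
    have : {y : EuclideanSpace ℝ (Fin 3) | y ≠ 0 ∧ 0 < r y} = {y : EuclideanSpace ℝ (Fin 3) | y ≠ 0} ∩ {y : EuclideanSpace ℝ (Fin 3) | 0 < r y} := rfl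
    rw [this]
    exact hU.inter (isOpen_lt continuous_const hrc)
  have hFcont : ContinuousOn F {y : EuclideanSpace ℝ (Fin 3) | y ≠ 0 ∧ 0 < r y} := by
    have hsub : {y : EuclideanSpace ℝ (Fin 3) | y ≠ 0 ∧ 0 < r y} ⊆ {y : EuclideanSpace ℝ (Fin 3) | y ≠ 0} := fun y hy => hy.1
    rw [hF_def]
    apply ContinuousOn.add
    · exact (hrc.continuousOn).mul ((hgc.mono hsub).pow 2)
    · apply ContinuousOn.mul ((hbc.mono hsub).pow 2)
      apply ContinuousOn.sub
      · apply ContinuousOn.div continuousOn_const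
        · exact (continuous_const.mul hrc).continuousOn
        · rintro y ⟨-, hy⟩
          exact ne_of_gt (by linarith)
      · exact continuousOn_const.mul (hucont.mono hsub)
  have hP : IsOpen ({y : EuclideanSpace ℝ (Fin 3) | y ≠ 0 ∧ 0 < r y} ∩ F ⁻¹' (Set.Ioi 0)) :=
    hFcont.isOpen_inter_preimage hU' isOpen_Ioi
  set W : Set (EuclideanSpace ℝ (Fin 3)) := ({y : EuclideanSpace ℝ (Fin 3) | y ≠ 0 ∧ 0 < r y} ∩ F ⁻¹' (Set.Ioi 0))
      ∩ (ball (0 : EuclideanSpace ℝ (Fin 3)) ρ₂ ∩ (closedBall (0 : EuclideanSpace ℝ (Fin 3)) ρ₁)ᶜ) with hWdef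
  have hWopen : IsOpen W := hP.inter (isOpen_ball.inter Metric.isClosed_closedBall.isOpen_compl)
  have hx₁W : x₁ ∈ W := by
    refine ⟨⟨⟨hx₁ne, hx₁r⟩, ?_⟩, mem_ball.2 ?_, fun hmem => ?_⟩
    · exact (hFbound x₁ hx₁ne hx₁r).2 hx₁b
    · rw [dist_zero_right, ← hn_def, hρ₂def]; linarith
    · rw [mem_closedBall, dist_zero_right, ← hn_def, hρ₁def] at hmem; linarith
  have hWA : W ⊆ {x : EuclideanSpace ℝ (Fin 3) | F x ≠ 0} ∩ A := by
    rintro x ⟨⟨-, hFx⟩, hx2, hx3⟩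
    refine ⟨ne_of_gt hFx, hx2, fun hmem => hx3 (ball_subset_closedBall hmem)⟩
  have hWzero : volume W = 0 := by
    have h1 : volume.restrict A {x : EuclideanSpace ℝ (Fin 3) | F x ≠ 0} = 0 := by
      have := hzero
      rw [Filter.EventuallyEq, ae_iff] at this
      simpa using this
    rw [Measure.restrict_apply' hAmeas] at h1
    exact measure_mono_null hWA h1
  have hWpos : 0 < volume W := hWopen.measure_pos volume ⟨x₁, hx₁W⟩
  rw [hWzero] at hWpos
  exact lt_irrefl 0 hWpos
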